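/- arXiv:0809.1812 — 2 statements merged into one kernel-verified Lean document; each statement's English description precedes it below -/
import Mathlib

section
/- For any finitary language V over a countable alphabet Σ (i.e., V ⊆ list Σ with the empty word excluded), the ω-power V^ω = {x ∈ Σ^ℕ : x is an infinite concatenation u₁u₂u₃⋯ with each uᵢ ∈ V} is an analytic subset of the product space Σ^ℕ (where Σ carries the discrete topology). -/
/-- The ω-power of a finitary language `V`: infinite words that are infinite
concatenations `u₁u₂u₃⋯` of nonempty finite words each belonging to `V`. -/
def OmegaPower {A : Type*} (V : Set (List A)) : Set (ℕ → A) :=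
  {x | ∃ u : ℕ → List A, (∀ i, u i ∈ V) ∧ (∀ i, u i ≠ []) ∧
    ∀ (n i : ℕ) (h : i < (u n).length),
      x ((∑ k ∈ Finset.range n, (u k).length) + i) = (u n).get ⟨i, h⟩}

/-- The ω-power of any language of nonempty finite words over a countable
discrete alphabet is an analytic subset of the product space `A^ℕ`. -/
theorem omegaPower_analyticSet {A : Type} [Countable A] [TopologicalSpace A]
    [DiscreteTopology A] (V : Set (List A)) (hV : ∀ v ∈ V, v ≠ []) :
    MeasureTheory.AnalyticSet (OmegaPower V) := by
  rcases V.eq_empty_or_nonempty with rfl | hne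
  · have : OmegaPower (∅ : Set (List A)) = ∅ := by
      ext x
      simp only [OmegaPower, Set.mem_setOf_eq, Set.mem_empty_iff_false, iff_false]
      rintro ⟨u, hu, -⟩
      exact hu 0
    rw [this]
    exact MeasureTheory.analyticSet_empty
  obtain ⟨f, hf⟩ := (Set.to_countable V).exists_eq_range hne
  set C : Set ((ℕ → A) × (ℕ → ℕ)) :=
    {p | ∀ (n i : ℕ) (h : i < (f (p.2 n)).length),
      p.1 ((∑ k ∈ Finset.range n, (f (p.2 k)).length) + i) = (f (p.2 n)).get ⟨i, h⟩}
    with hCdef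
  have hclosed : IsClosed C := by
    rw [← isOpen_compl_iff, isOpen_iff_mem_nhds]
    intro p hp
    simp only [hCdef, Set.mem_compl_iff, Set.mem_setOf_eq, not_forall] at hp
    obtain ⟨n, i, h, hne'⟩ := hp
    set t := (∑ k ∈ Finset.range n, (f (p.2 k)).length) + i with ht
    refine mem_nhds_iff.mpr
      ⟨({q : (ℕ → A) × (ℕ → ℕ) | q.1 t = p.1 t} ∩
        ⋂ k ∈ Finset.range (n + 1), {q | q.2 k = p.2 k}), ?_, ?_, ?_⟩
    · rintro q ⟨hq1, hq2⟩ hqC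
      simp only [Set.mem_iInter, Set.mem_setOf_eq, Finset.mem_range] at hq2
      have h2 : ∀ k ≤ n, q.2 k = p.2 k := fun k hk => hq2 k (Nat.lt_succ_of_le hk)
      have hqn : q.2 n = p.2 n := h2 n le_rfl
      have hsum : (∑ k ∈ Finset.range n, (f (q.2 k)).length)
          = ∑ k ∈ Finset.range n, (f (p.2 k)).length :=
        Finset.sum_congr rfl fun k hk => by
          rw [h2 k (le_of_lt (Finset.mem_range.mp hk))]
      have h' : i < (f (q.2 n)).length := by rw [hqn]; exact h
      have := hqC n i h'
      simp only [List.get_eq_getElem, hqn, hsum] at this ⊢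
      rw [← ht] at this
      simp only [List.get_eq_getElem] at hne'
      exact hne' (by rw [← hq1]; exact this)
    · refine IsOpen.inter ?_ ?_
      · show IsOpen ((fun q : (ℕ → A) × (ℕ → ℕ) => q.1 t) ⁻¹' {p.1 t})
        exact IsOpen.preimage ((continuous_apply t).comp continuous_fst) (isOpen_discrete _)
      · refine isOpen_biInter_finset fun k _ => ?_
        show IsOpen ((fun q : (ℕ → A) × (ℕ → ℕ) => q.2 k) ⁻¹' {p.2 k})
        exact IsOpen.preimage ((continuous_apply k).comp continuous_snd) (isOpen_discrete _)
    · exact ⟨rfl, by simp⟩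
  have himg : OmegaPower V = Prod.fst '' C := by
    ext x
    constructor
    · rintro ⟨u, huV, -, hu⟩
      have : ∀ i, u i ∈ Set.range f := fun i => hf ▸ huV i
      choose β hβ using this
      refine ⟨(x, β), ?_, rfl⟩
      intro n i h
      simp only [hCdef, List.get_eq_getElem, hβ] at h ⊢
      have := hu n i h
      simp only [List.get_eq_getElem] at this
      exact this
    · rintro ⟨⟨x', β⟩, hmem, rfl⟩
      refine ⟨fun i => f (β i), fun i => hf ▸ Set.mem_range_self _,
        fun i => hV _ (hf ▸ Set.mem_range_self _), hmem⟩
  rw [himg]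
  haveI : SecondCountableTopology A := DiscreteTopology.secondCountableTopology_of_countable
  exact hclosed.analyticSet.image_of_continuous continuous_fst
end

section
/- The set 2^ℕ \ P_∞ of eventually-zero binary sequences is not an ω-power: there is no set V of nonempty finite binary words such that V^ω equals the set of binary sequences with only finitely many 1's. -/
/-- `P_∞`: binary sequences with infinitely many `1`s. -/
def Pinf : Set (ℕ → Bool) := {α | ∀ i, ∃ j ≥ i, α j = true}

/-- The set of eventually-zero binary sequences is not an ω-power. -/
theorem compl_pinf_not_omegaPower :
    ¬ ∃ V : Set (List Bool), (∀ v ∈ V, v ≠ []) ∧ OmegaPower V = Pinfᶜ := by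
  rintro ⟨V, -, hV⟩
  -- the sequence 1 0 0 0 ... is eventually zero
  have hx : (fun j => decide (j = 0)) ∈ Pinfᶜ := by
    intro hmem
    obtain ⟨j, hj, hjt⟩ := hmem 1
    simp at hjt
    omega
  rw [← hV] at hx
  obtain ⟨u, huV, hne, hspec⟩ := hx
  set w := u 0 with hw
  have hL : 0 < w.length := List.length_pos_iff.2 (hne 0)
  have hw0 : w.get ⟨0, hL⟩ = true := by
    have := hspec 0 0 hL
    simpa using this.symm
  -- consider y = w w w w ...
  set y : ℕ → Bool := fun j => w.get ⟨j % w.length, Nat.mod_lt _ hL⟩ with hy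
  have hyΩ : y ∈ OmegaPower V := by
    refine ⟨fun _ => w, fun _ => huV 0, fun _ => hne 0, ?_⟩
    intro n i h
    have hsum : (∑ _k ∈ Finset.range n, w.length) = n * w.length := by
      simp [Finset.sum_const, mul_comm]
    have hmod : (n * w.length + i) % w.length = i := by
      rw [Nat.mul_add_mod']
      exact Nat.mod_eq_of_lt h
    simp only [hy, hsum, hmod]
  have hyP : y ∈ Pinf := by
    intro i
    refine ⟨i * w.length, Nat.le_mul_of_pos_right i hL, ?_⟩
    simp only [hy, Nat.mul_mod_left]
    exact hw0
  rw [hV] at hyΩ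
  exact hyΩ hyP
end
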